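/- Let {u_{λ_j}}_{j=1}^n be K-normalised singular vectors of an absolutely one-homogeneous convex functional J satisfying the orthogonality condition ⟨Ku_{λ_i}, Ku_{λ_j}⟩ = 0 for i ≠ j and the SUB0 condition Σ_{j=1}^n λ_j K*K u_{λ_j} ∈ ∂J(0). Then J(Σ_{j=1}^n c_j u_{λ_j}) = Σ_{j=1}^n c_j J(u_{λ_j}) for all nonnegative coefficients c_j ≥ 0. -/

import Mathlib

open RealInnerProductSpace Finset

/-- The subdifferential of `J` at `u`. -/
def subdiff {U : Type*} [NormedAddCommGroup U] [NormedSpace ℝ U]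
    (J : U → ℝ) (u : U) : Set (U →L[ℝ] ℝ) :=
  {p | ∀ v : U, J u + p (v - u) ≤ J v}

/-- The Banach adjoint `K*` applied to `w ∈ H`. -/
noncomputable def Kstar {U H : Type*} [NormedAddCommGroup U] [NormedSpace ℝ U]
    [NormedAddCommGroup H] [InnerProductSpace ℝ H]
    (K : U →L[ℝ] H) (w : H) : U →L[ℝ] ℝ :=
  ((innerSL ℝ) w).comp K


/-!
Convexity and absolute one-homogeneity make `J` subadditive, so
`J (∑ c j • u j) ≤ ∑ c j * J (u j)` for `c ≥ 0`. For the reverse inequality, test the SUB0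
subgradient `p = ∑ λ_j K*K u_j ∈ ∂J(0)` against `w = ∑ c j • u j`: by orthonormality of the
`K u_j`, `p w = ∑ λ_j c_j = ∑ c_j J(u_j)`, while `p ∈ ∂J(0)` gives `p w ≤ J w`.
-/

section Homogeneous

variable {U : Type*} [AddCommGroup U] [Module ℝ U] {J : U → ℝ}

theorem map_zero_of_abs_homogeneous (hhom : ∀ (c : ℝ) (x : U), J (c • x) = |c| * J x) :
    J 0 = 0 := by
  simpa using hhom 0 0

theorem ConvexOn.map_add_le_of_abs_homogeneous (hconv : ConvexOn ℝ Set.univ J)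
    (hhom : ∀ (c : ℝ) (x : U), J (c • x) = |c| * J x) (x y : U) :
    J (x + y) ≤ J x + J y := by
  have hmid := hconv.2 (Set.mem_univ x) (Set.mem_univ y)
    (by norm_num : (0 : ℝ) ≤ 1 / 2) (by norm_num : (0 : ℝ) ≤ 1 / 2) (by norm_num)
  rw [← smul_add, hhom, smul_eq_mul, smul_eq_mul] at hmid
  norm_num at hmid
  linarith

theorem ConvexOn.map_sum_smul_le_of_abs_homogeneous {ι : Type*} (hconv : ConvexOn ℝ Set.univ J)
    (hhom : ∀ (c : ℝ) (x : U), J (c • x) = |c| * J x) (s : Finset ι) (c : ι → ℝ)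
    (hc : ∀ i ∈ s, 0 ≤ c i) (u : ι → U) :
    J (∑ i ∈ s, c i • u i) ≤ ∑ i ∈ s, c i * J (u i) := by
  calc J (∑ i ∈ s, c i • u i)
      ≤ ∑ i ∈ s, J (c i • u i) :=
        le_sum_of_subadditive J (map_zero_of_abs_homogeneous hhom).le
          (hconv.map_add_le_of_abs_homogeneous hhom) s _
    _ = ∑ i ∈ s, c i * J (u i) :=
        sum_congr rfl fun i hi => by rw [hhom, abs_of_nonneg (hc i hi)]

end Homogeneous

theorem le_of_mem_subdiff_zero {U : Type*} [NormedAddCommGroup U] [NormedSpace ℝ U]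
    {J : U → ℝ} {p : U →L[ℝ] ℝ} (hp : p ∈ subdiff J 0) (hJ0 : J 0 = 0) (v : U) :
    p v ≤ J v := by
  simpa [hJ0] using hp v

theorem inner_sum_smul_of_orthonormal_on {H ι : Type*} [NormedAddCommGroup H]
    [InnerProductSpace ℝ H] {s : Finset ι} {v : ι → H} (hnorm : ∀ j ∈ s, ‖v j‖ = 1)
    (horth : ∀ i ∈ s, ∀ j ∈ s, i ≠ j → ⟪v i, v j⟫ = 0) (c : ι → ℝ) {i : ι} (hi : i ∈ s) :
    ⟪v i, ∑ j ∈ s, c j • v j⟫ = c i := by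
  rw [inner_sum, sum_eq_single_of_mem i hi fun j hj hji => by
    rw [real_inner_smul_right, horth i hi j hj hji.symm, mul_zero]]
  rw [real_inner_smul_right, real_inner_self_eq_norm_sq, hnorm i hi]
  ring

theorem Kstar_apply {U H : Type*} [NormedAddCommGroup U] [NormedSpace ℝ U]
    [NormedAddCommGroup H] [InnerProductSpace ℝ H] (K : U →L[ℝ] H) (w : H) (x : U) :
    Kstar K w x = ⟪w, K x⟫ :=
  rfl

theorem sum_smul_Kstar_apply_sum_smul_of_orthonormal_on {U H ι : Type*} [NormedAddCommGroup U]
    [NormedSpace ℝ U] [NormedAddCommGroup H] [InnerProductSpace ℝ H] (K : U →L[ℝ] H)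
    {s : Finset ι} {u : ι → U} (hnorm : ∀ j ∈ s, ‖K (u j)‖ = 1)
    (horth : ∀ i ∈ s, ∀ j ∈ s, i ≠ j → ⟪K (u i), K (u j)⟫ = 0) (lam c : ι → ℝ) :
    (∑ j ∈ s, lam j • Kstar K (K (u j))) (∑ j ∈ s, c j • u j) = ∑ j ∈ s, lam j * c j := by
  rw [_root_.sum_apply]
  refine sum_congr rfl fun i hi => ?_
  rw [smul_apply, Kstar_apply, map_sum K]
  simp only [map_smul]
  rw [inner_sum_smul_of_orthonormal_on hnorm horth c hi, smul_eq_mul]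

theorem J_linear_on_nonneg_combinations_general
    {U H : Type*} [NormedAddCommGroup U] [NormedSpace ℝ U]
    [NormedAddCommGroup H] [InnerProductSpace ℝ H]
    (K : U →L[ℝ] H) (J : U → ℝ)
    (hconv : ConvexOn ℝ Set.univ J)
    (hhom : ∀ (c : ℝ) (x : U), J (c • x) = |c| * J x)
    (n : ℕ) (u : ℕ → U) (lam : ℕ → ℝ)
    (hnorm : ∀ j < n, ‖K (u j)‖ = 1)
    (hlam : ∀ j < n, lam j = J (u j))
    (horth : ∀ i < n, ∀ j < n, i ≠ j → ⟪K (u i), K (u j)⟫ = 0)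
    (hSUB0 : (∑ j ∈ range n, lam j • Kstar K (K (u j))) ∈ subdiff J 0) :
    ∀ c : ℕ → ℝ, (∀ j, 0 ≤ c j) →
      J (∑ j ∈ range n, c j • u j) = ∑ j ∈ range n, c j * J (u j) := by
  intro c hc
  have hpair : (∑ j ∈ range n, lam j • Kstar K (K (u j))) (∑ j ∈ range n, c j • u j)
      = ∑ j ∈ range n, c j * J (u j) := by
    rw [sum_smul_Kstar_apply_sum_smul_of_orthonormal_on K
      (fun j hj => hnorm j (mem_range.mp hj))
      (fun i hi j hj => horth i (mem_range.mp hi) j (mem_range.mp hj))]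
    exact sum_congr rfl fun j hj => by rw [hlam j (mem_range.mp hj), mul_comm]
  refine le_antisymm
    (hconv.map_sum_smul_le_of_abs_homogeneous hhom _ c (fun j _ => hc j) u) ?_
  rw [← hpair]
  exact le_of_mem_subdiff_zero hSUB0 (map_zero_of_abs_homogeneous hhom) _

/-- Under orthogonality and SUB0, `J` is linear on nonnegative combinations of the
singular vectors. -/
theorem J_linear_on_nonneg_combinations
    {U H : Type*} [NormedAddCommGroup U] [NormedSpace ℝ U]
    [NormedAddCommGroup H] [InnerProductSpace ℝ H]
    (K : U →L[ℝ] H) (J : U → ℝ)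
    (hconv : ConvexOn ℝ Set.univ J)
    (hlsc : LowerSemicontinuous J)
    (hhom : ∀ (c : ℝ) (x : U), J (c • x) = |c| * J x)
    (n : ℕ) (u : ℕ → U) (lam : ℕ → ℝ)
    (hsv : ∀ j < n, (lam j • Kstar K (K (u j))) ∈ subdiff J (u j))
    (hnorm : ∀ j < n, ‖K (u j)‖ = 1)
    (hlam : ∀ j < n, lam j = J (u j))
    (horth : ∀ i < n, ∀ j < n, i ≠ j → ⟪K (u i), K (u j)⟫ = 0)
    (hSUB0 : (∑ j ∈ range n, lam j • Kstar K (K (u j))) ∈ subdiff J 0) :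
    ∀ c : ℕ → ℝ, (∀ j, 0 ≤ c j) →
      J (∑ j ∈ range n, c j • u j) = ∑ j ∈ range n, c j * J (u j) :=
  J_linear_on_nonneg_combinations_general K J hconv hhom n u lam hnorm hlam horth hSUB0
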